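/- (Theorem 5.1, the Adler-Shiota-van Moerbeke formula, case ν = 1, μ = 2, in tau-function form.) Suppose τ₁, τ₂ : (ℕ → ℂ) × (ℕ → ℂ) → ℂ are continuous and (τ₁, τ₂) satisfies the KP-mKP Fay identity. Then for all x, y : ℕ → ℂ and all pairwise distinct nonzero γ, ζ, z ∈ ℂ: (γ/(γ − ζ)) · ( (ζ/γ) · τ₂(x + [γ⁻¹] − [ζ⁻¹], y − [z⁻¹]) · τ₁(x, y) − τ₂(x, y − [z⁻¹]) · τ₁(x + [γ⁻¹] − [ζ⁻¹], y) ) = − τ₁(x − [ζ⁻¹], y) · τ₂(x + [γ⁻¹], y − [z⁻¹]). (This is the identity X₁(γ,ζ) ⋆ w₂(z) = ((γ−ζ)/γ) Y₁₂(γ,ζ) w₂(z) of the paper, written out for the tau functions with the exponential factors cancelled and multiplied through by τ₁².) -/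

import Mathlib

/-- The shift `[s] : ℕ → ℂ`, `[s](k) = s^(k+1)/(k+1)`, representing the
sequence `(s, s²/2, s³/3, …)` of time variables. -/
noncomputable def sh (s : ℂ) : ℕ → ℂ := fun k => s ^ (k + 1) / ((k : ℂ) + 1)

/-- The KP-mKP Fay identity (equation (3.1) of the paper) for a pair of tau
functions `(τ₁, τ₂)`. -/
def KPmKPFay (τ₁ τ₂ : (ℕ → ℂ) × (ℕ → ℂ) → ℂ) : Prop :=
  ∀ x y : ℕ → ℂ, ∀ s0 s1 s2 s3 t0 t1 t2 t3 : ℂ,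
    s0 ≠ 0 → s1 ≠ 0 → s2 ≠ 0 → s3 ≠ 0 →
    s0 ≠ s1 → s0 ≠ s2 → s0 ≠ s3 → s1 ≠ s2 → s1 ≠ s3 → s2 ≠ s3 →
    t0 ≠ 0 → t1 ≠ 0 → t2 ≠ 0 → t3 ≠ 0 →
    t0 ≠ t1 → t0 ≠ t2 → t0 ≠ t3 → t1 ≠ t2 → t1 ≠ t3 → t2 ≠ t3 →
    (s1 * (s1 - s0) / ((s1 - s2) * (s1 - s3)))
        * τ₁ (x + sh s2 + sh s3, y + sh t1 + sh t2 + sh t3)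
        * τ₂ (x + sh s0 + sh s1, y + sh t0)
      + (s2 * (s2 - s0) / ((s2 - s3) * (s2 - s1)))
        * τ₁ (x + sh s3 + sh s1, y + sh t1 + sh t2 + sh t3)
        * τ₂ (x + sh s0 + sh s2, y + sh t0)
      + (s3 * (s3 - s0) / ((s3 - s1) * (s3 - s2)))
        * τ₁ (x + sh s1 + sh s2, y + sh t1 + sh t2 + sh t3)
        * τ₂ (x + sh s0 + sh s3, y + sh t0)
    = (t1 * (t1 - t0) / ((t1 - t2) * (t1 - t3)))
        * τ₂ (x + sh s1 + sh s2 + sh s3, y + sh t2 + sh t3)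
        * τ₁ (x + sh s0, y + sh t0 + sh t1)
      + (t2 * (t2 - t0) / ((t2 - t3) * (t2 - t1)))
        * τ₂ (x + sh s1 + sh s2 + sh s3, y + sh t3 + sh t1)
        * τ₁ (x + sh s0, y + sh t0 + sh t2)
      + (t3 * (t3 - t0) / ((t3 - t1) * (t3 - t2)))
        * τ₂ (x + sh s1 + sh s2 + sh s3, y + sh t1 + sh t2)
        * τ₁ (x + sh s0, y + sh t0 + sh t3)

@[fun_prop]
lemma sh_continuous : Continuous sh :=
  continuous_pi fun k => (continuous_pow (k+1)).div_const _

lemma sh_zero : sh 0 = 0 := by funext k; simp [sh]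

lemma ne_aux {ε a b : ℂ} (ha : a ≠ 0) (h : ε ≠ b / a) : a * ε ≠ b := by
  intro hh; exact h (by field_simp [← hh]; linear_combination hh)

/-- Theorem 5.1, ASvM formula, case ν = 1, μ = 2, tau form. -/
theorem asvm_nu_one_mu_two (τ₁ τ₂ : (ℕ → ℂ) × (ℕ → ℂ) → ℂ)
    (hc1 : Continuous τ₁) (hc2 : Continuous τ₂)
    (hFay : KPmKPFay τ₁ τ₂) :
    ∀ x y : ℕ → ℂ, ∀ γ ζ z : ℂ,
      γ ≠ 0 → ζ ≠ 0 → z ≠ 0 → γ ≠ ζ → γ ≠ z → ζ ≠ z →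
      (γ / (γ - ζ)) * ((ζ / γ)
          * τ₂ (x + sh γ⁻¹ - sh ζ⁻¹, y - sh z⁻¹) * τ₁ (x, y)
        - τ₂ (x, y - sh z⁻¹) * τ₁ (x + sh γ⁻¹ - sh ζ⁻¹, y))
      = - τ₁ (x - sh ζ⁻¹, y) * τ₂ (x + sh γ⁻¹, y - sh z⁻¹) := by
  intro x y γ ζ z hγ hζ hz hγζ hγz hζz
  have hγ' : γ⁻¹ ≠ 0 := inv_ne_zero hγ
  have hζ' : ζ⁻¹ ≠ 0 := inv_ne_zero hζ
  have hz' : z⁻¹ ≠ 0 := inv_ne_zero hz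
  have hζγ' : ζ⁻¹ ≠ γ⁻¹ := fun h => hγζ (inv_inj.mp h).symm
  set xf : ℕ → ℂ := x - sh ζ⁻¹ with hxf
  set yf : ℕ → ℂ := y - sh z⁻¹ with hyf
  set G : ℂ → ℂ := fun ε =>
    (γ⁻¹ * (γ⁻¹ - ζ⁻¹) / ((γ⁻¹ - ε) * (γ⁻¹ - 2*ε)))
        * τ₁ (xf + sh ε + sh (2*ε), yf + sh z⁻¹ + sh (2*ε) + sh (3*ε))
        * τ₂ (xf + sh ζ⁻¹ + sh γ⁻¹, yf + sh ε)
    + (-(ε - ζ⁻¹) / (ε - γ⁻¹))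
        * τ₁ (xf + sh (2*ε) + sh γ⁻¹, yf + sh z⁻¹ + sh (2*ε) + sh (3*ε))
        * τ₂ (xf + sh ζ⁻¹ + sh ε, yf + sh ε)
    + (2*(2*ε - ζ⁻¹) / (2*ε - γ⁻¹))
        * τ₁ (xf + sh γ⁻¹ + sh ε, yf + sh z⁻¹ + sh (2*ε) + sh (3*ε))
        * τ₂ (xf + sh ζ⁻¹ + sh (2*ε), yf + sh ε)
    - (z⁻¹ * (z⁻¹ - ε) / ((z⁻¹ - 2*ε) * (z⁻¹ - 3*ε)))
        * τ₂ (xf + sh γ⁻¹ + sh ε + sh (2*ε), yf + sh (2*ε) + sh (3*ε))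
        * τ₁ (xf + sh ζ⁻¹, yf + sh ε + sh z⁻¹)
    - (-(2*ε) / (2*ε - z⁻¹))
        * τ₂ (xf + sh γ⁻¹ + sh ε + sh (2*ε), yf + sh (3*ε) + sh z⁻¹)
        * τ₁ (xf + sh ζ⁻¹, yf + sh ε + sh (2*ε))
    - (6*ε / (3*ε - z⁻¹))
        * τ₂ (xf + sh γ⁻¹ + sh ε + sh (2*ε), yf + sh z⁻¹ + sh (2*ε))
        * τ₁ (xf + sh ζ⁻¹, yf + sh ε + sh (3*ε)) with hGdef
  -- G vanishes on a punctured neighborhood of 0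
  have hev : ∀ᶠ ε in nhdsWithin (0:ℂ) {0}ᶜ, G ε = 0 := by
    have hne : ∀ c : ℂ, c ≠ 0 → ∀ᶠ ε in nhdsWithin (0:ℂ) {0}ᶜ, ε ≠ c := fun c hc =>
      eventually_nhdsWithin_of_eventually_nhds (eventually_ne_nhds (Ne.symm hc))
    have h0 : ∀ᶠ ε in nhdsWithin (0:ℂ) {0}ᶜ, ε ≠ 0 := eventually_mem_nhdsWithin
    filter_upwards [h0, hne γ⁻¹ hγ', hne (γ⁻¹/2) (by simp [hγ']),
      hne ζ⁻¹ hζ', hne (ζ⁻¹/2) (by simp [hζ']),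
      hne z⁻¹ hz', hne (z⁻¹/2) (by simp [hz']), hne (z⁻¹/3) (by simp [hz'])]
      with ε hε0 hεγ hεγ2 hεζ hεζ2 hεz hεz2 hεz3
    have h2ε : (2:ℂ)*ε ≠ 0 := mul_ne_zero two_ne_zero hε0
    have h3ε : (3:ℂ)*ε ≠ 0 := mul_ne_zero three_ne_zero hε0
    have h2γ : 2*ε ≠ γ⁻¹ := ne_aux two_ne_zero hεγ2
    have h2ζ : 2*ε ≠ ζ⁻¹ := ne_aux two_ne_zero hεζ2
    have h2z : 2*ε ≠ z⁻¹ := ne_aux two_ne_zero hεz2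
    have h3z : 3*ε ≠ z⁻¹ := ne_aux three_ne_zero hεz3
    have hε2ε : ε ≠ 2*ε := fun h => hε0 (by linear_combination -h)
    have hε3ε : ε ≠ 3*ε := fun h => hε0 (by linear_combination -h/2)
    have h23ε : 2*ε ≠ 3*ε := fun h => hε0 (by linear_combination -h)
    have fay := hFay xf yf ζ⁻¹ γ⁻¹ ε (2*ε) ε z⁻¹ (2*ε) (3*ε)
      hζ' hγ' hε0 h2ε hζγ' (Ne.symm hεζ) (Ne.symm h2ζ) (Ne.symm hεγ) (Ne.symm h2γ) hε2ε
      hε0 hz' h2ε h3ε hεz hε2ε hε3ε (Ne.symm h2z) (Ne.symm h3z) h23ε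
    have e2 : -(ε - ζ⁻¹) / (ε - γ⁻¹) = ε * (ε - ζ⁻¹) / ((ε - 2*ε) * (ε - γ⁻¹)) := by
      rw [div_eq_div_iff (sub_ne_zero.mpr hεγ)
        (mul_ne_zero (sub_ne_zero.mpr hε2ε) (sub_ne_zero.mpr hεγ))]
      ring
    have e3 : 2*(2*ε - ζ⁻¹) / (2*ε - γ⁻¹)
        = 2*ε * (2*ε - ζ⁻¹) / ((2*ε - γ⁻¹) * (2*ε - ε)) := by
      rw [div_eq_div_iff (sub_ne_zero.mpr h2γ)
        (mul_ne_zero (sub_ne_zero.mpr h2γ) (sub_ne_zero.mpr (Ne.symm hε2ε)))]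
      ring
    have e5 : -(2*ε) / (2*ε - z⁻¹) = 2*ε * (2*ε - ε) / ((2*ε - 3*ε) * (2*ε - z⁻¹)) := by
      rw [div_eq_div_iff (sub_ne_zero.mpr h2z)
        (mul_ne_zero (sub_ne_zero.mpr h23ε) (sub_ne_zero.mpr h2z))]
      ring
    have e6 : 6*ε / (3*ε - z⁻¹) = 3*ε * (3*ε - ε) / ((3*ε - z⁻¹) * (3*ε - 2*ε)) := by
      rw [div_eq_div_iff (sub_ne_zero.mpr h3z)
        (mul_ne_zero (sub_ne_zero.mpr h3z) (sub_ne_zero.mpr (Ne.symm h23ε)))]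
      ring
    simp only [hGdef]
    rw [e2, e3, e5, e6]
    linear_combination fay
  -- G is continuous at 0
  have hcont : ContinuousAt G 0 := by
    rw [hGdef]
    apply ContinuousAt.sub
    apply ContinuousAt.sub
    apply ContinuousAt.sub
    apply ContinuousAt.add
    apply ContinuousAt.add
    · exact ((ContinuousAt.div (by fun_prop) (by fun_prop)
        (by simp [hγ'])).mul (by fun_prop)).mul (by fun_prop)
    · exact ((ContinuousAt.div (by fun_prop) (by fun_prop)
        (by simp [hγ'])).mul (by fun_prop)).mul (by fun_prop)
    · exact ((ContinuousAt.div (by fun_prop) (by fun_prop)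
        (by simp [hγ'])).mul (by fun_prop)).mul (by fun_prop)
    · exact ((ContinuousAt.div (by fun_prop) (by fun_prop)
        (by simp [hz'])).mul (by fun_prop)).mul (by fun_prop)
    · exact ((ContinuousAt.div (by fun_prop) (by fun_prop)
        (by simp [hz'])).mul (by fun_prop)).mul (by fun_prop)
    · exact ((ContinuousAt.div (by fun_prop) (by fun_prop)
        (by simp [hz'])).mul (by fun_prop)).mul (by fun_prop)
  have hG0 : G 0 = 0 := by
    have h1 : Filter.Tendsto G (nhdsWithin (0:ℂ) {0}ᶜ) (nhds (G 0)) :=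
      (hcont.continuousWithinAt).tendsto
    have h2 : Filter.Tendsto G (nhdsWithin (0:ℂ) {0}ᶜ) (nhds 0) :=
      Filter.Tendsto.congr' (hev.mono fun ε h => h.symm) tendsto_const_nhds
    exact tendsto_nhds_unique h1 h2
  -- compute G 0 and finish
  have a1 : xf + sh ζ⁻¹ + sh γ⁻¹ = x + sh γ⁻¹ := by rw [hxf]; abel
  have a2 : yf + sh z⁻¹ = y := by rw [hyf]; abel
  have a3 : xf + sh γ⁻¹ = x + sh γ⁻¹ - sh ζ⁻¹ := by rw [hxf]; abel
  have a4 : xf + sh ζ⁻¹ = x := by rw [hxf]; abel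
  simp only [hGdef, mul_zero, sh_zero, add_zero, sub_zero, zero_sub, zero_mul,
    neg_neg, neg_zero, zero_div, a1, a2, a3, a4] at hG0
  have hγζ' : γ - ζ ≠ 0 := sub_ne_zero.mpr hγζ
  have r1 : γ⁻¹ * (γ⁻¹ - ζ⁻¹) / (γ⁻¹ * γ⁻¹) = (ζ - γ)/ζ := by field_simp
  have r2 : ζ⁻¹ / -γ⁻¹ = -(γ/ζ) := by rw [div_neg, inv_div_inv]
  have r3 : 2 * -ζ⁻¹ / -γ⁻¹ = 2*(γ/ζ) := by field_simp
  have r4 : z⁻¹ * z⁻¹ / (z⁻¹ * z⁻¹) = 1 := by field_simp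
  rw [r1, r2, r3, r4] at hG0
  field_simp at hG0
  simp only [one_div] at hG0
  have hmul : γ * (ζ / γ) = ζ := by field_simp
  rw [div_mul_eq_mul_div, div_eq_iff hγζ']
  linear_combination (τ₂ (x + sh γ⁻¹ - sh ζ⁻¹, yf) * τ₁ (x, y)) * hmul - hG0
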